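/- Define G(u) = 2u/π + 2(1−u)u·cot(πu) for u ∈ (0,1), extended by continuity to G(0) = G(1) = 2/π, and for real a < b define f_{a,b}(u) = (e^{−2πiau} − e^{−2πibu})/2. There is an absolute constant C > 0 such that for every real t ≥ 1 and all real numbers a < b, |Im ∫_0^t G(u/t) e^{−(2πu)²/2} f_{a,b}(u) du/u − (1/√(2π)) ∫_a^b e^{−x²/2} dx| ≤ C/t. -/

import Mathlib

open Complex

/-- Selberg's function `G(u) = 2u/π + 2(1-u)u cot(πu)` on `(0,1)`,
extended by continuity with `G(0) = G(1) = 2/π`. -/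
noncomputable def SelbergG (u : ℝ) : ℝ :=
  if u = 0 ∨ u = 1 then 2 / Real.pi
  else 2 * u / Real.pi + 2 * (1 - u) * u * Real.cot (Real.pi * u)

/-- `f_{a,b}(u) = (e^{-2πiau} - e^{-2πibu})/2`. -/
noncomputable def fab (a b u : ℝ) : ℂ :=
  (Complex.exp (-2 * Real.pi * a * u * Complex.I) -
    Complex.exp (-2 * Real.pi * b * u * Complex.I)) / 2


/-!
Taking imaginary parts, `Im f_{a,b}(u) = π u ∫_a^b cos (2πxu) dx`. Since `e^{-(2πu)²/2}` is the
Fourier transform of the standard normal density, Fubini turns the Gaussian integral into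
`(2/π) Im ∫_0^∞ e^{-(2πu)²/2} f_{a,b}(u) du/u`. On `(0, t]` the weight `G(u/t)` differs from
`2/π` by `O(u/t)`, and beyond `t` the factor `1/u` is at most `1/t`; since `|f_{a,b}| ≤ 1`, both
errors are `O(1/t)` times the total mass of `e^{-(2πu)²/2}`.
-/

open MeasureTheory Set
open scoped Real

noncomputable def gaussFourier (u : ℝ) : ℝ := Real.exp (-(2 * π * u) ^ 2 / 2)

lemma gaussFourier_pos (u : ℝ) : 0 < gaussFourier u := Real.exp_pos _

lemma gaussFourier_eq : gaussFourier = fun u ↦ Real.exp (-(2 * π ^ 2) * u ^ 2) := by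
  ext u; rw [gaussFourier]; ring_nf

lemma continuous_gaussFourier : Continuous gaussFourier := by
  unfold gaussFourier; fun_prop

lemma integrable_gaussFourier : Integrable gaussFourier := by
  rw [gaussFourier_eq]; exact integrable_exp_neg_mul_sq (by positivity)

lemma integral_gaussFourier_le_one : ∫ u, gaussFourier u ≤ 1 := by
  rw [gaussFourier_eq, integral_gaussian, Real.sqrt_le_one, div_le_one (by positivity)]
  nlinarith [Real.pi_gt_three]

lemma integral_gaussFourier_mul_cos (x : ℝ) :
    ∫ u, gaussFourier u * Real.cos (2 * π * x * u) = Real.exp (-x ^ 2 / 2) / √(2 * π) := by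
  set b : ℂ := ((2 * π ^ 2 : ℝ) : ℂ)
  set c : ℂ := ((2 * π * x : ℝ) : ℂ)
  have hb : 0 < b.re := by rw [Complex.ofReal_re]; positivity
  have hint : Integrable fun u : ℝ ↦ cexp (I * c * u) * cexp (-b * u ^ 2) := by
    simpa only [← Complex.exp_add, add_zero, add_comm (-b * _)] using
      integrable_cexp_quadratic hb (I * c) 0
  have hre (u : ℝ) : (cexp (I * c * u) * cexp (-b * u ^ 2)).re =
      gaussFourier u * Real.cos (2 * π * x * u) := by
    rw [gaussFourier_eq, mul_comm,
      show -b * u ^ 2 = ((-(2 * π ^ 2) * u ^ 2 : ℝ) : ℂ) by simp only [b]; push_cast; ring,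
      show I * c * u = ((2 * π * x * u : ℝ) : ℂ) * I by simp only [c]; push_cast; ring,
      ← Complex.ofReal_exp, Complex.re_ofReal_mul, Complex.exp_ofReal_mul_I_re]
  have hsqrt : (π / b) ^ (1 / 2 : ℂ) = ((√(2 * π))⁻¹ : ℝ) := by
    rw [show π / b = ((2 * π)⁻¹ : ℝ) by simp only [b]; push_cast; field_simp,
      show (1 / 2 : ℂ) = ((1 / 2 : ℝ) : ℂ) by push_cast; ring,
      ← Complex.ofReal_cpow (by positivity), ← Real.sqrt_eq_rpow, Real.sqrt_inv]
  have hexp : cexp (-c ^ 2 / (4 * b)) = Real.exp (-x ^ 2 / 2) := by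
    rw [Complex.ofReal_exp]; congr 1; simp only [b, c]; push_cast; field_simp; ring
  simp_rw [← hre, ← RCLike.re_to_complex]
  rw [integral_re hint, fourierIntegral_gaussian hb, hsqrt, hexp, ← Complex.ofReal_mul,
    RCLike.re_to_complex, Complex.ofReal_re, inv_mul_eq_div]

lemma setIntegral_Ioi_gaussFourier_mul_cos (x : ℝ) :
    ∫ u in Ioi 0, gaussFourier u * Real.cos (2 * π * x * u) =
      Real.exp (-x ^ 2 / 2) / (2 * √(2 * π)) := by
  have heven (u : ℝ) : gaussFourier |u| * Real.cos (2 * π * x * |u|) =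
      gaussFourier u * Real.cos (2 * π * x * u) := by
    rcases abs_choice u with h | h <;> simp [h, gaussFourier]
  have h := integral_comp_abs (f := fun u ↦ gaussFourier u * Real.cos (2 * π * x * u))
  simp only [heven, integral_gaussFourier_mul_cos] at h
  rw [div_mul_eq_div_div_swap, h]
  ring

lemma im_fab (a b u : ℝ) :
    (fab a b u).im = π * u * ∫ x in a..b, Real.cos (2 * π * x * u) := by
  have hderiv (x : ℝ) : HasDerivAt (fun x ↦ Real.sin (2 * π * x * u))
      (Real.cos (2 * π * x * u) * (2 * π * u)) x := by
    simpa [mul_comm, mul_left_comm, mul_assoc] using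
      ((hasDerivAt_id x).const_mul (2 * π * u)).sin
  have hftc := intervalIntegral.integral_eq_sub_of_hasDerivAt (fun x _ ↦ hderiv x)
    (Continuous.intervalIntegrable (by fun_prop) a b)
  rw [intervalIntegral.integral_mul_const] at hftc
  have hexp (c : ℝ) : cexp (-2 * π * c * u * I) = cexp ((-(2 * π * c * u) : ℝ) * I) := by
    push_cast; ring_nf
  rw [fab, hexp a, hexp b, Complex.div_ofNat_im, Complex.sub_im, Complex.exp_ofReal_mul_I_im,
    Complex.exp_ofReal_mul_I_im, Real.sin_neg, Real.sin_neg]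
  linarith

lemma norm_fab (a b u : ℝ) : ‖fab a b u‖ = |Real.sin (π * (b - a) * u)| := by
  have h : fab a b u = -(cexp (((-2 * π * a * u : ℝ) : ℂ) * I) *
      (cexp (I * ((-2 * π * (b - a) * u : ℝ) : ℂ)) - 1)) / 2 := by
    rw [fab, mul_sub, ← Complex.exp_add, mul_one, neg_sub]
    congr 2 <;> congr 1 <;> push_cast <;> ring
  rw [h, norm_div, norm_neg, norm_mul, Complex.norm_exp_ofReal_mul_I,
    Complex.norm_exp_I_mul_ofReal_sub_one, one_mul, Complex.norm_two, norm_mul, Real.norm_two,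
    Real.norm_eq_abs, mul_div_cancel_left₀ _ two_ne_zero,
    show -2 * π * (b - a) * u / 2 = -(π * (b - a) * u) by ring, Real.sin_neg, abs_neg]

lemma norm_fab_le_one (a b u : ℝ) : ‖fab a b u‖ ≤ 1 :=
  (norm_fab a b u).trans_le (Real.abs_sin_le_one _)

lemma norm_fab_le (a b u : ℝ) : ‖fab a b u‖ ≤ π * |b - a| * |u| := by
  rw [norm_fab]
  exact Real.abs_sin_le_abs.trans_eq (by rw [abs_mul, abs_mul, abs_of_pos Real.pi_pos])

lemma continuous_fab (a b : ℝ) : Continuous (fab a b) := by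
  unfold fab; fun_prop

lemma integrableOn_of_norm_le_mul_gaussFourier {E : Type*} [NormedAddCommGroup E] {f : ℝ → E}
    {s : Set ℝ} {C : ℝ} (hs : MeasurableSet s) (hf : AEStronglyMeasurable f (volume.restrict s))
    (h : ∀ u ∈ s, ‖f u‖ ≤ C * gaussFourier u) : IntegrableOn f s :=
  (integrable_gaussFourier.const_mul C).integrableOn.mono' hf
    ((ae_restrict_iff' hs).mpr (.of_forall h))

lemma norm_setIntegral_le_of_norm_le_mul_gaussFourier {E : Type*} [NormedAddCommGroup E]
    [NormedSpace ℝ E] {f : ℝ → E} {s : Set ℝ} {C : ℝ} (hs : MeasurableSet s) (hC : 0 ≤ C)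
    (h : ∀ u ∈ s, ‖f u‖ ≤ C * gaussFourier u) : ‖∫ u in s, f u‖ ≤ C :=
  calc ‖∫ u in s, f u‖ ≤ ∫ u in s, C * gaussFourier u :=
        norm_integral_le_of_norm_le (integrable_gaussFourier.const_mul C).integrableOn
          ((ae_restrict_iff' hs).mpr (.of_forall h))
    _ ≤ ∫ u, C * gaussFourier u :=
        setIntegral_le_integral (integrable_gaussFourier.const_mul C)
          (.of_forall fun u ↦ mul_nonneg hC (gaussFourier_pos u).le)
    _ ≤ C := by
        rw [integral_const_mul]; exact mul_le_of_le_one_right hC integral_gaussFourier_le_one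

lemma norm_gaussFourier_mul_fab_div_le (a b u : ℝ) :
    ‖(gaussFourier u : ℂ) * fab a b u / u‖ ≤ π * |b - a| * gaussFourier u := by
  rw [mul_div_assoc, norm_mul, Complex.norm_real, Real.norm_of_nonneg (gaussFourier_pos u).le,
    norm_div, Complex.norm_real, Real.norm_eq_abs, mul_comm]
  exact mul_le_mul_of_nonneg_right
    (div_le_of_le_mul₀ (abs_nonneg u) (by positivity) (norm_fab_le a b u)) (gaussFourier_pos u).le

lemma norm_gaussFourier_mul_fab_div_le_inv_mul (a b : ℝ) {t u : ℝ} (ht : 0 < t) (htu : t ≤ u) :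
    ‖(gaussFourier u : ℂ) * fab a b u / u‖ ≤ t⁻¹ * gaussFourier u := by
  rw [norm_div, norm_mul, Complex.norm_real, Real.norm_of_nonneg (gaussFourier_pos u).le,
    Complex.norm_real, Real.norm_of_nonneg (ht.trans_le htu).le, div_eq_inv_mul]
  exact mul_le_mul (inv_anti₀ ht htu)
    (mul_le_of_le_one_right (gaussFourier_pos u).le (norm_fab_le_one a b u))
    (mul_nonneg (gaussFourier_pos u).le (norm_nonneg _)) (inv_nonneg.mpr ht.le)

lemma integrable_gaussFourier_mul_fab_div (a b : ℝ) :
    Integrable fun u : ℝ ↦ (gaussFourier u : ℂ) * fab a b u / u := by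
  rw [← integrableOn_univ]
  refine integrableOn_of_norm_le_mul_gaussFourier MeasurableSet.univ ?_
    fun u _ ↦ norm_gaussFourier_mul_fab_div_le a b u
  have := continuous_fab a b
  have := continuous_gaussFourier
  exact Measurable.aestronglyMeasurable (by fun_prop)

lemma gaussian_intervalIntegral_eq_im_integral_Ioi (a b : ℝ) :
    1 / √(2 * π) * ∫ x in a..b, Real.exp (-x ^ 2 / 2) =
      2 / π * (∫ u in Ioi 0, (gaussFourier u : ℂ) * fab a b u / u).im := by
  have hfubini : Integrable
      (Function.uncurry fun x u ↦ gaussFourier u * Real.cos (2 * π * x * u))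
      ((volume.restrict (uIoc a b)).prod (volume.restrict (Ioi 0))) := by
    have h1 : IntegrableOn (fun _ ↦ (1 : ℝ)) (uIoc a b) := integrableOn_const measure_Ioc_lt_top.ne
    refine (h1.mul_prod integrable_gaussFourier.integrableOn).mono' ?_ (.of_forall fun p ↦ ?_)
    · have := continuous_gaussFourier
      exact Continuous.aestronglyMeasurable
        (f := fun p : ℝ × ℝ ↦ gaussFourier p.2 * Real.cos (2 * π * p.1 * p.2)) (by fun_prop)
    · show ‖gaussFourier p.2 * Real.cos (2 * π * p.1 * p.2)‖ ≤ 1 * gaussFourier p.2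
      rw [one_mul, norm_mul, Real.norm_of_nonneg (gaussFourier_pos _).le]
      exact mul_le_of_le_one_right (gaussFourier_pos _).le (Real.abs_cos_le_one _)
  have him (u : ℝ) (hu : u ∈ Ioi 0) : ((gaussFourier u : ℂ) * fab a b u / u).im =
      π * ∫ x in a..b, gaussFourier u * Real.cos (2 * π * x * u) := by
    rw [mul_div_assoc, Complex.im_ofReal_mul, Complex.div_ofReal_im, im_fab,
      intervalIntegral.integral_const_mul]
    field_simp [(mem_Ioi.mp hu).ne']
  calc 1 / √(2 * π) * ∫ x in a..b, Real.exp (-x ^ 2 / 2)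
      = ∫ x in a..b, 2 * ∫ u in Ioi 0, gaussFourier u * Real.cos (2 * π * x * u) := by
        rw [← intervalIntegral.integral_const_mul]
        refine intervalIntegral.integral_congr fun x _ ↦ ?_
        rw [setIntegral_Ioi_gaussFourier_mul_cos]
        field_simp
    _ = 2 / π * ∫ u in Ioi 0, ((gaussFourier u : ℂ) * fab a b u / u).im := by
        rw [intervalIntegral.integral_const_mul, intervalIntegral_integral_swap hfubini,
          setIntegral_congr_fun measurableSet_Ioi him, integral_const_mul]
        field_simp
    _ = 2 / π * (∫ u in Ioi 0, (gaussFourier u : ℂ) * fab a b u / u).im := by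
        rw [← RCLike.im_to_complex,
          ← integral_im (integrable_gaussFourier_mul_fab_div a b).integrableOn]
        rfl

namespace Real

lemma cot_nonneg_of_pos_of_le_pi_div_two {w : ℝ} (h0 : 0 < w) (h1 : w ≤ π / 2) :
    0 ≤ cot w := by
  rw [cot_eq_cos_div_sin]
  exact div_nonneg (cos_nonneg_of_mem_Icc ⟨by linarith [pi_pos], h1⟩)
    (sin_pos_of_pos_of_lt_pi h0 (by linarith [pi_pos])).le

lemma mul_cot_le_one {w : ℝ} (h0 : 0 < w) (h1 : w ≤ π / 2) : w * cot w ≤ 1 := by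
  have hsin : 0 < sin w := sin_pos_of_pos_of_lt_pi h0 (by linarith [pi_pos])
  rw [cot_eq_cos_div_sin, ← mul_div_assoc, div_le_one hsin]
  rcases h1.lt_or_eq with h1 | rfl
  · have htan := lt_tan h0 h1
    rw [tan_eq_sin_div_cos, lt_div_iff₀ (cos_pos_of_mem_Ioo ⟨by linarith, h1⟩)] at htan
    exact htan.le
  · rw [cos_pi_div_two, mul_zero]; exact hsin.le

lemma one_sub_sq_le_mul_cot {w : ℝ} (h0 : 0 < w) (h1 : w ≤ π / 2) : 1 - w ^ 2 ≤ w * cot w := by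
  have hsin : 0 < sin w := sin_pos_of_pos_of_lt_pi h0 (by linarith [pi_pos])
  have hcos : 0 ≤ cos w := cos_nonneg_of_mem_Icc ⟨by linarith [pi_pos], h1⟩
  rw [cot_eq_cos_div_sin, ← mul_div_assoc, le_div_iff₀ hsin]
  rcases le_or_gt 1 w with hw | hw
  · nlinarith [mul_nonneg h0.le hcos, mul_nonneg (by nlinarith : 0 ≤ w ^ 2 - 1) hsin.le]
  · nlinarith [sin_lt h0, one_sub_sq_div_two_le_cos (x := w)]

lemma abs_mul_cot_sub_one_le_sq {w : ℝ} (h0 : 0 < w) (h1 : w ≤ π / 2) :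
    |w * cot w - 1| ≤ w ^ 2 :=
  abs_le.mpr ⟨by linarith [one_sub_sq_le_mul_cot h0 h1],
    by linarith [mul_cot_le_one h0 h1, sq_nonneg w]⟩

end Real

lemma measurable_selbergG : Measurable SelbergG := by
  refine Measurable.ite ((measurableSet_singleton 0).union (measurableSet_singleton 1))
    measurable_const ?_
  have : Measurable Real.cot := by
    simp only [funext Real.cot_eq_cos_div_sin]
    fun_prop
  fun_prop

lemma pi_mul_selbergG_sub_two {v : ℝ} (h0 : 0 < v) (h1 : v < 1) :
    π * SelbergG v - 2 = 2 * (1 - v) * (π * v * Real.cot (π * v) - 1) := by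
  rw [SelbergG, if_neg (by rintro (h | h) <;> linarith)]
  field_simp
  ring

lemma abs_selbergG_sub_le {v : ℝ} (h0 : 0 < v) (h1 : v ≤ 1) : |SelbergG v - 2 / π| ≤ 4 * v := by
  have hpi := Real.pi_pos
  rcases h1.lt_or_eq with h1 | rfl
  swap
  · simp [SelbergG]
  suffices |π * SelbergG v - 2| ≤ 4 * π * v by
    rw [show SelbergG v - 2 / π = (π * SelbergG v - 2) / π by field_simp, abs_div,
      abs_of_pos hpi, div_le_iff₀ hpi]
    linarith
  rw [pi_mul_selbergG_sub_two h0 h1, abs_mul, abs_of_pos (by linarith : 0 < 2 * (1 - v))]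
  rcases le_or_gt v (1 / 2) with hv | hv
  · have h := Real.abs_mul_cot_sub_one_le_sq (w := π * v) (by positivity) (by nlinarith)
    calc 2 * (1 - v) * |π * v * Real.cot (π * v) - 1| ≤ 2 * (π * v) ^ 2 := by
          nlinarith [abs_nonneg (π * v * Real.cot (π * v) - 1)]
      _ ≤ 4 * π * v := by
          have : π * v ≤ 2 := by nlinarith [Real.pi_lt_four]
          nlinarith [mul_le_mul_of_nonneg_left this (mul_pos hpi h0).le]
  · have hrefl : Real.cot (π * v) = -Real.cot (π * (1 - v)) := by
      rw [show π * v = π - π * (1 - v) by ring, Real.cot_eq_cos_div_sin, Real.cot_eq_cos_div_sin,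
        Real.sin_pi_sub, Real.cos_pi_sub, neg_div]
    have hs0 : 0 < π * (1 - v) := by nlinarith
    have hs1 : π * (1 - v) ≤ π / 2 := by nlinarith
    have hcot := Real.cot_nonneg_of_pos_of_le_pi_div_two hs0 hs1
    have hy := Real.mul_cot_le_one hs0 hs1
    rw [hrefl, abs_of_neg (by nlinarith)]
    nlinarith [mul_le_mul_of_nonneg_left hy h0.le, Real.pi_gt_three]

lemma norm_selbergG_sub_smul_le (a b : ℝ) {t u : ℝ} (ht : 0 < t) (hu : u ∈ Ioc 0 t) :
    ‖(SelbergG (u / t) - 2 / π) • ((gaussFourier u : ℂ) * fab a b u / u)‖ ≤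
      4 / t * gaussFourier u := by
  rw [norm_smul, Real.norm_eq_abs]
  calc |SelbergG (u / t) - 2 / π| * ‖(gaussFourier u : ℂ) * fab a b u / u‖
      ≤ 4 * (u / t) * (u⁻¹ * gaussFourier u) :=
        mul_le_mul (abs_selbergG_sub_le (div_pos hu.1 ht) ((div_le_one ht).mpr hu.2))
          (norm_gaussFourier_mul_fab_div_le_inv_mul a b hu.1 le_rfl) (norm_nonneg _)
          (by linarith [div_pos hu.1 ht])
    _ = 4 / t * gaussFourier u := by field_simp [hu.1.ne']

lemma integrableOn_selbergG_sub_smul (a b : ℝ) {t : ℝ} (ht : 0 < t) :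
    IntegrableOn (fun u ↦ (SelbergG (u / t) - 2 / π) • ((gaussFourier u : ℂ) * fab a b u / u))
      (Ioc 0 t) :=
  integrableOn_of_norm_le_mul_gaussFourier measurableSet_Ioc
    ((((measurable_selbergG.comp (measurable_id.div_const t)).sub
      measurable_const).aestronglyMeasurable).smul
        (integrable_gaussFourier_mul_fab_div a b).aestronglyMeasurable.restrict)
    fun _ hu ↦ norm_selbergG_sub_smul_le a b ht hu

lemma intervalIntegral_selbergG_eq (a b : ℝ) {t : ℝ} (ht : 0 < t) :
    ∫ u in (0 : ℝ)..t, (SelbergG (u / t) : ℂ) * Real.exp (-(2 * π * u) ^ 2 / 2) * fab a b u / u =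
      (∫ u in Ioc 0 t, (SelbergG (u / t) - 2 / π) • ((gaussFourier u : ℂ) * fab a b u / u)) +
        (2 / π : ℝ) • ∫ u in Ioc 0 t, (gaussFourier u : ℂ) * fab a b u / u := by
  rw [intervalIntegral.integral_of_le ht.le, ← integral_smul,
    ← integral_add (integrableOn_selbergG_sub_smul a b ht)
      (g := fun u ↦ (2 / π : ℝ) • ((gaussFourier u : ℂ) * fab a b u / u))
      ((integrable_gaussFourier_mul_fab_div a b).integrableOn.smul (2 / π : ℝ))]
  refine setIntegral_congr_fun measurableSet_Ioc fun u _ ↦ ?_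
  rw [← add_smul, sub_add_cancel, Complex.real_smul, gaussFourier]
  ring

/-- Lemma 4.2: uniformly in `a < b`,
`Im ∫_0^t G(u/t) e^{-(2πu)²/2} f_{a,b}(u) du/u = (1/√(2π)) ∫_a^b e^{-x²/2} dx + O(1/t)`. -/
theorem smoothed_gaussian_integral :
    ∃ C : ℝ, 0 < C ∧
      ∀ (t : ℝ), 1 ≤ t → ∀ (a b : ℝ), a < b →
        |(∫ u in (0 : ℝ)..t,
              (SelbergG (u / t) : ℂ) * Real.exp (-(2 * Real.pi * u) ^ 2 / 2) *
                fab a b u / (u : ℂ)).im -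
            (1 / Real.sqrt (2 * Real.pi)) * ∫ x in a..b, Real.exp (-x ^ 2 / 2)|
          ≤ C / t := by
  refine ⟨5, by norm_num, fun t ht a b _ ↦ ?_⟩
  have ht0 : 0 < t := by linarith
  set K : ℝ → ℂ := fun u ↦ (gaussFourier u : ℂ) * fab a b u / u
  have hK : Integrable K := integrable_gaussFourier_mul_fab_div a b
  have htail : ∫ u in Ioi 0, K u = (∫ u in Ioc 0 t, K u) + ∫ u in Ioi t, K u := by
    rw [← Ioc_union_Ioi_eq_Ioi ht0.le,
      setIntegral_union Ioc_disjoint_Ioi_same measurableSet_Ioi hK.integrableOn hK.integrableOn]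
  have hnear : ‖∫ u in Ioc 0 t, (SelbergG (u / t) - 2 / π) • K u‖ ≤ 4 / t :=
    norm_setIntegral_le_of_norm_le_mul_gaussFourier measurableSet_Ioc (by positivity)
      fun _ hu ↦ norm_selbergG_sub_smul_le a b ht0 hu
  have hfar : ‖∫ u in Ioi t, K u‖ ≤ t⁻¹ :=
    norm_setIntegral_le_of_norm_le_mul_gaussFourier measurableSet_Ioi (by positivity)
      fun _ hu ↦ norm_gaussFourier_mul_fab_div_le_inv_mul a b ht0 (le_of_lt hu)
  have h2pi : 2 / π ≤ 1 := by rw [div_le_one Real.pi_pos]; linarith [Real.pi_gt_three]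
  rw [gaussian_intervalIntegral_eq_im_integral_Ioi, intervalIntegral_selbergG_eq a b ht0, htail]
  calc _ = |(∫ u in Ioc 0 t, (SelbergG (u / t) - 2 / π) • K u).im -
        2 / π * (∫ u in Ioi t, K u).im| := by
          congr 1
          simp only [Complex.add_im, Complex.smul_im, smul_eq_mul]
          ring
    _ ≤ ‖∫ u in Ioc 0 t, (SelbergG (u / t) - 2 / π) • K u‖ + 2 / π * ‖∫ u in Ioi t, K u‖ := by
          refine (abs_sub _ _).trans (add_le_add (Complex.abs_im_le_norm _) ?_)
          rw [abs_mul, abs_of_pos (by positivity)]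
          exact mul_le_mul_of_nonneg_left (Complex.abs_im_le_norm _) (by positivity)
    _ ≤ 4 / t + 1 * t⁻¹ := by gcongr
    _ = 5 / t := by ring
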